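/- arXiv:2206.05334 — 4 statements merged into one kernel-verified Lean document; each statement's English description precedes it below -/
import Mathlib

section
/- For any real θ and natural numbers n, k with 3(2n+1) ≤ 2k+1 < 5(2n+1), the sum (1/(2n+1)) ∑_{ℓ=0}^{2n} (cos((θ+2πℓ)/(2n+1)))^{2k+1} equals (1/4^k)·[C(2k+1,k−n)·cos θ + C(2k+1,k−3n−1)·cos(3θ)]. -/
/-!
Write `2 cos x = e^{ix} + e^{-ix}` and expand `(2 cos x)^M` binomially. Averaging
`e^{im(θ + 2πℓ)/N}` over `ℓ < N` kills every frequency `m` not divisible by `N`.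
For `M = 2k+1` and `N = 2n+1` the frequencies `2j - M` are odd and `|2j - M| ≤ M < 5N`,
so only `±N` and `±3N` survive, namely `j = k - n, k + n + 1, k - 3n - 1, k + 3n + 2`;
these pair up through `C(M, j) = C(M, M - j)` into `cos θ` and `cos 3θ`.
-/

open Real Finset

lemma geom_sum_eq_ite_of_pow_eq_one {K : Type*} [Field K] [DecidableEq K] {x : K} {N : ℕ}
    (hx : x ^ N = 1) : ∑ i ∈ range N, x ^ i = if x = 1 then (N : K) else 0 := by
  split_ifs with h
  · simp [h]
  · rw [geom_sum_eq h, hx, sub_self, zero_div]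

namespace Complex

lemma two_mul_cos_pow (z : ℂ) (M : ℕ) :
    (2 * cos z) ^ M
      = ∑ j ∈ range (M + 1), (M.choose j : ℂ) * exp (((2 * j - M : ℤ) : ℂ) * z * I) := by
  rw [two_cos, add_pow]
  refine sum_congr rfl fun j hj => ?_
  have hjM : j ≤ M := Nat.lt_succ_iff.mp (mem_range.mp hj)
  rw [← exp_nat_mul, ← exp_nat_mul, ← exp_add, mul_comm]
  push_cast [Nat.cast_sub hjM]
  ring_nf

lemma sum_range_exp_int_mul_two_pi_I_div {N : ℕ} (hN : N ≠ 0) (m : ℤ) :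
    ∑ ℓ ∈ range N, exp (m * (2 * π * I * ℓ / N))
      = if (N : ℤ) ∣ m then (N : ℂ) else 0 := by
  have hζ := isPrimitiveRoot_exp N hN
  have hpow : ∀ ℓ : ℕ,
      exp (m * (2 * π * I * ℓ / N)) = (exp (2 * π * I / N) ^ m) ^ ℓ := by
    intro ℓ
    rw [← exp_int_mul, ← exp_nat_mul]
    ring_nf
  simp only [hpow, ← hζ.zpow_eq_one_iff_dvd]
  refine geom_sum_eq_ite_of_pow_eq_one ?_
  rw [← zpow_natCast, ← zpow_mul, mul_comm m, zpow_mul, zpow_natCast, hζ.pow_eq_one, one_zpow]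

lemma sum_range_two_mul_cos_pow {N : ℕ} (hN : N ≠ 0) (M : ℕ) (z : ℂ) :
    ∑ ℓ ∈ range N, (2 * cos ((z + 2 * π * ℓ) / N)) ^ M
      = N * ∑ j ∈ (range (M + 1)).filter (fun j : ℕ => (N : ℤ) ∣ 2 * (j : ℤ) - M),
          (M.choose j : ℂ) * exp (((2 * j - M : ℤ) : ℂ) * z / N * I) := by
  have hsplit : ∀ (m : ℤ) (ℓ : ℕ), exp (m * ((z + 2 * π * ℓ) / N) * I)
      = exp (m * z / N * I) * exp (m * (2 * π * I * ℓ / N)) := by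
    intro m ℓ
    rw [← exp_add]
    ring_nf
  simp only [two_mul_cos_pow, hsplit]
  rw [sum_comm, sum_filter, mul_sum]
  refine sum_congr rfl fun j _ => ?_
  simp only [← mul_sum]
  rw [sum_range_exp_int_mul_two_pi_I_div hN]
  split_ifs <;> ring

end Complex

lemma Real.sum_range_two_mul_cos_pow {N : ℕ} (hN : N ≠ 0) (M : ℕ) (θ : ℝ) :
    ∑ ℓ ∈ range N, (2 * cos ((θ + 2 * π * ℓ) / N)) ^ M
      = N * ∑ j ∈ (range (M + 1)).filter (fun j : ℕ => (N : ℤ) ∣ 2 * (j : ℤ) - M),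
          (M.choose j : ℝ) * cos ((2 * j - M : ℤ) * θ / N) := by
  have h := congrArg Complex.re (Complex.sum_range_two_mul_cos_pow hN M θ)
  convert h using 1
  · norm_cast
  · rw [← Complex.ofReal_natCast, Complex.re_ofReal_mul, Complex.re_sum]
    congr 1
    refine sum_congr rfl fun j _ => ?_
    rw [← Complex.ofReal_natCast, Complex.re_ofReal_mul]
    norm_cast
    rw [Complex.exp_ofReal_mul_I_re]

lemma filter_dvd_two_mul_sub_eq {n k : ℕ} (h1 : 3 * (2 * n + 1) ≤ 2 * k + 1)
    (h2 : 2 * k + 1 < 5 * (2 * n + 1)) :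
    (range (2 * k + 1 + 1)).filter
        (fun j : ℕ => ((2 * n + 1 : ℕ) : ℤ) ∣ 2 * (j : ℤ) - (2 * k + 1 : ℕ))
      = {k - 3 * n - 1, k - n, k + n + 1, k + 3 * n + 2} := by
  ext j
  simp only [mem_filter, mem_range, mem_insert, mem_singleton]
  constructor
  · rintro ⟨hj, q, hq⟩
    push_cast at hq
    have hq_lt : q < 5 := by nlinarith
    have hq_gt : -5 < q := by nlinarith
    interval_cases q <;> omega
  · rintro (rfl | rfl | rfl | rfl)
    · exact ⟨by omega, -3, by omega⟩
    · exact ⟨by omega, -1, by omega⟩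
    · exact ⟨by omega, 1, by omega⟩
    · exact ⟨by omega, 3, by omega⟩

lemma sum_range_two_mul_cos_pow_of_three_mul_le_of_lt_five_mul (θ : ℝ) {n k : ℕ}
    (h1 : 3 * (2 * n + 1) ≤ 2 * k + 1) (h2 : 2 * k + 1 < 5 * (2 * n + 1)) :
    ∑ ℓ ∈ range (2 * n + 1), (2 * cos ((θ + 2 * π * ℓ) / (2 * n + 1))) ^ (2 * k + 1)
      = 2 * (2 * n + 1) * ((Nat.choose (2 * k + 1) (k - n) : ℝ) * cos θ
          + (Nat.choose (2 * k + 1) (k - 3 * n - 1) : ℝ) * cos (3 * θ)) := by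
  have key := Real.sum_range_two_mul_cos_pow (N := 2 * n + 1) (by omega) (2 * k + 1) θ
  rw [filter_dvd_two_mul_sub_eq h1 h2,
    sum_insert (by simp only [mem_insert, mem_singleton]; omega),
    sum_insert (by simp only [mem_insert, mem_singleton]; omega),
    sum_insert (by simp only [mem_singleton]; omega), sum_singleton] at key
  have hcos : ∀ (j : ℕ) (q : ℤ), 2 * (j : ℤ) - (2 * k + 1 : ℕ) = q * (2 * n + 1 : ℕ) →
      cos (((2 * j - (2 * k + 1 : ℕ) : ℤ) : ℝ) * θ / (2 * n + 1 : ℕ)) = cos (q * θ) := by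
    intro j q hj
    rw [hj]
    push_cast
    field_simp
  rw [hcos _ (-3) (by omega), hcos _ (-1) (by omega), hcos _ 1 (by omega), hcos _ 3 (by omega),
    Nat.choose_symm_of_eq_add (show 2 * k + 1 = k + n + 1 + (k - n) by omega),
    Nat.choose_symm_of_eq_add (show 2 * k + 1 = k + 3 * n + 2 + (k - 3 * n - 1) by omega)] at key
  push_cast at key
  rw [key, neg_mul, neg_one_mul, one_mul, cos_neg, cos_neg]
  ring

theorem stmt_9 (θ : ℝ) (n k : ℕ) (h1 : 3 * (2 * n + 1) ≤ 2 * k + 1)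
    (h2 : 2 * k + 1 < 5 * (2 * n + 1)) :
    (1 / (2 * n + 1 : ℝ)) * ∑ ℓ ∈ Finset.range (2 * n + 1),
        (Real.cos ((θ + 2 * Real.pi * ℓ) / (2 * n + 1))) ^ (2 * k + 1)
      = (1 / 4 ^ k) * ((Nat.choose (2 * k + 1) (k - n) : ℝ) * Real.cos θ
          + (Nat.choose (2 * k + 1) (k - 3 * n - 1) : ℝ) * Real.cos (3 * θ)) := by
  have h := sum_range_two_mul_cos_pow_of_three_mul_le_of_lt_five_mul θ h1 h2
  simp only [mul_pow, ← mul_sum] at h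
  rw [pow_succ, pow_mul, show (2 : ℝ) ^ 2 = 4 by norm_num] at h
  rw [one_div_mul_eq_div, one_div_mul_eq_div, div_eq_div_iff (by positivity) (by positivity)]
  linear_combination h / 2
end

section
/- For any real θ and natural numbers n, k with 0 ≤ k < 2n+1, the average (1/(2n+1)) ∑_{ℓ=0}^{2n} (cos((θ+2πℓ)/(2n+1)))^{2k} equals (1/4^k)·C(2k,k). -/
/-!
Writing `cos x = (e^{ix} + e^{-ix}) / 2` gives
`cos^{2k} x = 4^{-k} ∑_{j ≤ 2k} C(2k, j) e^{i(2j - 2k)x}`. Summed over the `N = 2n + 1` points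
`(θ + 2πℓ) / N`, the frequency `2(j - k)` contributes a geometric sum of `ζ^{2(j-k)}`, with `ζ` a
primitive `N`-th root of unity, which vanishes unless `N ∣ 2(j - k)`. As `N` is odd and
`|j - k| ≤ k < N`, only `j = k` survives, leaving `N · C(2k, k) / 4^k`.
-/

open Real Finset

open Complex in
theorem Complex.cos_pow_eq_sum_exp (z : ℂ) (m : ℕ) :
    cos z ^ m = (∑ j ∈ range (m + 1), (m.choose j : ℂ) * exp (z * I * (2 * j - m))) / 2 ^ m := by
  rw [cos, div_pow, add_pow]
  congr 1
  refine sum_congr rfl fun j hj => ?_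
  have hjm : j ≤ m := Nat.lt_succ_iff.mp (mem_range.mp hj)
  rw [← exp_nat_mul, ← exp_nat_mul, ← exp_add, Nat.cast_sub hjm]
  ring_nf

open Complex in
theorem sum_exp_equispaced_eq_zero (θ : ℂ) {N : ℕ} {m : ℤ} (hm : ¬ (N : ℤ) ∣ m) :
    ∑ ℓ ∈ range N, exp ((θ + 2 * π * ℓ) / N * I * m) = 0 := by
  rcases eq_or_ne N 0 with rfl | hN
  · simp
  set ζ := exp (2 * π * I / N)
  have hζ : IsPrimitiveRoot ζ N := isPrimitiveRoot_exp N hN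
  have hζm : ζ ^ m ≠ 1 := by rwa [Ne, hζ.zpow_eq_one_iff_dvd]
  have hsplit (ℓ : ℕ) : exp ((θ + 2 * π * ℓ) / N * I * m) = exp (θ * I * m / N) * (ζ ^ m) ^ ℓ := by
    rw [← exp_int_mul, ← Complex.exp_nat_mul, ← Complex.exp_add]
    congr 1
    field_simp
  have hζmN : (ζ ^ m) ^ N = 1 := by
    rw [← zpow_natCast, ← zpow_mul, mul_comm, zpow_mul, zpow_natCast, hζ.pow_eq_one, one_zpow]
  have hgeom : ∑ ℓ ∈ range N, (ζ ^ m) ^ ℓ = 0 := by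
    rw [geom_sum_eq hζm, hζmN, sub_self, zero_div]
  simp_rw [hsplit, ← mul_sum, hgeom, mul_zero]

theorem Int.eq_zero_of_odd_dvd_two_mul {N a : ℤ} (hN : Odd N) (ha : |a| < N) (h : N ∣ 2 * a) :
    a = 0 := by
  obtain ⟨r, rfl⟩ := hN
  have hcop : IsCoprime (2 * r + 1) 2 := ⟨1, -r, by ring⟩
  exact Int.eq_zero_of_abs_lt_dvd (hcop.dvd_of_dvd_mul_left h) ha

open Complex in
theorem sum_cos_pow_equispaced (θ : ℂ) (n k : ℕ) (hk : k < 2 * n + 1) :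
    ∑ ℓ ∈ range (2 * n + 1), cos ((θ + 2 * π * ℓ) / (2 * n + 1)) ^ (2 * k)
      = (2 * n + 1) * (2 * k).choose k / 4 ^ k := by
  simp_rw [Complex.cos_pow_eq_sum_exp, ← sum_div, pow_mul]
  norm_num only [Nat.cast_mul, Nat.cast_ofNat]
  rw [sum_comm, sum_eq_single k]
  · simp [mul_comm]
  · intro j hj hjk
    have hodd : ¬ ((2 * n + 1 : ℕ) : ℤ) ∣ 2 * j - 2 * k := by
      intro hdvd
      rw [← mul_sub] at hdvd
      have hjk' : |(j : ℤ) - k| < (2 * n + 1 : ℕ) := by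
        rw [abs_lt]
        have := mem_range.mp hj
        omega
      have := Int.eq_zero_of_odd_dvd_two_mul (by simp) hjk' hdvd
      omega
    have := sum_exp_equispaced_eq_zero θ hodd
    push_cast at this
    rw [← mul_sum, this, mul_zero]
  · simp
    omega

theorem stmt_10 (θ : ℝ) (n k : ℕ) (hk : k < 2 * n + 1) :
    (1 / (2 * n + 1 : ℝ)) * ∑ ℓ ∈ Finset.range (2 * n + 1),
        (Real.cos ((θ + 2 * Real.pi * ℓ) / (2 * n + 1))) ^ (2 * k)
      = (1 / 4 ^ k) * (Nat.choose (2 * k) k : ℝ) := by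
  have hsum : ∑ ℓ ∈ range (2 * n + 1), Real.cos ((θ + 2 * π * ℓ) / (2 * n + 1)) ^ (2 * k)
      = (2 * n + 1) * (2 * k).choose k / 4 ^ k := by
    apply Complex.ofReal_injective
    push_cast
    exact sum_cos_pow_equispaced θ n k hk
  rw [hsum]
  field_simp
end

section
/- For any real θ and natural numbers n, k with 2n+1 ≤ k < 4n+2, the average (1/(2n+1)) ∑_{ℓ=0}^{2n} (cos((θ+2πℓ)/(2n+1)))^{2k} equals (1/4^k)·[C(2k,k) + 2·C(2k,k−2n−1)·cos(2θ)]. -/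
open Real Finset

/-!
Expanding `cos x = (e^{ix} + e^{-ix})/2` binomially, the `ℓ`-th node contributes
`C(2k, j) e^{i(2j-2k)θ/N} ζ^{(2j-2k)ℓ}` with `N = 2n+1` and `ζ = e^{2πi/N}`. Summing over `ℓ` kills
every term unless `N ∣ 2j - 2k`, i.e. `N ∣ j - k` as `N` is odd; since `|j - k| ≤ k < 2N`, only
`j = k` and `j = k ± N` survive, and the two outer terms pair up into `2 C(2k, k-N) cos 2θ`.
-/

theorem IsPrimitiveRoot.sum_range_pow_zpow {K : Type*} [Field K] {ζ : K} {N : ℕ}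
    (hζ : IsPrimitiveRoot ζ N) (m : ℤ) :
    ∑ ℓ ∈ range N, (ζ ^ m) ^ ℓ = if (N : ℤ) ∣ m then (N : K) else 0 := by
  split_ifs with hdvd
  · simp [(hζ.zpow_eq_one_iff_dvd m).mpr hdvd]
  · have hne : ζ ^ m ≠ 1 := mt (hζ.zpow_eq_one_iff_dvd m).mp hdvd
    rw [geom_sum_eq hne, ← zpow_natCast, ← zpow_mul, mul_comm, zpow_mul, hζ.zpow_eq_one,
      one_zpow, sub_self, zero_div]

namespace Complex

theorem cos_pow_eq_sum (z : ℂ) (m : ℕ) :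
    cos z ^ m =
      (∑ j ∈ range (m + 1), (m.choose j : ℂ) * exp ((2 * j - m : ℤ) * z * I)) / 2 ^ m := by
  rw [cos, div_pow, add_pow, sum_div, sum_div]
  refine sum_congr rfl fun j hj => ?_
  rw [← exp_nat_mul, ← exp_nat_mul, ← exp_add, mul_comm]
  congr 3
  push_cast [Nat.le_of_lt_succ (mem_range.mp hj)]
  ring

theorem sum_range_cos_add_two_pi_mul_div_pow {N : ℕ} (hN : N ≠ 0) (θ : ℂ) (m : ℕ) :
    ∑ ℓ ∈ range N, cos ((θ + 2 * π * ℓ) / N) ^ m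
      = N / 2 ^ m * ∑ j ∈ (range (m + 1)).filter (fun j : ℕ => (N : ℤ) ∣ 2 * j - m),
          (m.choose j : ℂ) * exp ((2 * j - m : ℤ) * θ * I / N) := by
  have hζ := isPrimitiveRoot_exp N hN
  have hNc : (N : ℂ) ≠ 0 := Nat.cast_ne_zero.mpr hN
  have hterm : ∀ (j : ℤ) (ℓ : ℕ), exp (j * ((θ + 2 * π * ℓ) / N) * I)
      = exp (j * θ * I / N) * (exp (2 * π * I / N) ^ j) ^ ℓ := by
    intro j ℓ
    rw [← exp_int_mul, ← exp_nat_mul, ← exp_add]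
    congr 1
    field_simp
  simp_rw [cos_pow_eq_sum, hterm, ← sum_div, sum_comm (s := range N), ← mul_assoc, ← mul_sum,
    hζ.sum_range_pow_zpow, mul_ite, mul_zero, sum_ite, sum_const_zero, add_zero, mul_sum, sum_div]
  refine sum_congr rfl fun j _ => ?_
  push_cast
  ring

end Complex

theorem filter_range_dvd_two_mul_sub {N k : ℕ} (hN : Odd N) (hk₁ : N ≤ k) (hk₂ : k < 2 * N) :
    (range (2 * k + 1)).filter (fun j : ℕ => (N : ℤ) ∣ 2 * j - (2 * k : ℕ))
      = {k - N, k, k + N} := by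
  ext j
  simp only [mem_filter, mem_range, mem_insert, mem_singleton]
  constructor
  · rintro ⟨hj, hdvd⟩
    obtain ⟨s, hs⟩ : (N : ℤ) ∣ j - k :=
      Int.dvd_of_dvd_mul_right_of_gcd_one (b := 2) (by push_cast at hdvd; rwa [mul_sub])
        hN.coprime_two_right
    have hs₁ : -2 < s := lt_of_mul_lt_mul_left (by omega) (Int.natCast_nonneg N)
    have hs₂ : s < 2 := lt_of_mul_lt_mul_left (by omega) (Int.natCast_nonneg N)
    interval_cases s <;> omega
  · rintro (rfl | rfl | rfl)
    · exact ⟨by omega, -2, by push_cast [hk₁]; ring⟩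
    · exact ⟨by omega, 0, by push_cast; ring⟩
    · exact ⟨by omega, 2, by push_cast; ring⟩

theorem stmt_11 (θ : ℝ) (n k : ℕ) (h1 : 2 * n + 1 ≤ k) (h2 : k < 4 * n + 2) :
    (1 / (2 * n + 1 : ℝ)) * ∑ ℓ ∈ Finset.range (2 * n + 1),
        (Real.cos ((θ + 2 * Real.pi * ℓ) / (2 * n + 1))) ^ (2 * k)
      = (1 / 4 ^ k) * ((Nat.choose (2 * k) k : ℝ)
          + 2 * (Nat.choose (2 * k) (k - (2 * n + 1)) : ℝ) * Real.cos (2 * θ)) := by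
  have hsum := Complex.sum_range_cos_add_two_pi_mul_div_pow (N := 2 * n + 1) (by omega) θ (2 * k)
  rw [filter_range_dvd_two_mul_sub (odd_two_mul_add_one n) h1 (by omega),
    sum_insert (by simp only [mem_insert, mem_singleton]; omega), sum_insert (by simp),
    sum_singleton,
    Nat.choose_symm_of_eq_add (by omega : 2 * k = (k + (2 * n + 1)) + (k - (2 * n + 1)))] at hsum
  have hN : (2 * n + 1 : ℂ) ≠ 0 := by exact_mod_cast (2 * n).succ_ne_zero
  push_cast [h1] at hsum
  rw [show (2 * ((k : ℂ) - (2 * n + 1)) - 2 * k) * θ * Complex.I / (2 * n + 1)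
      = -(2 * θ * Complex.I) by field_simp; ring,
    show (2 * (k : ℂ) - 2 * k) * θ * Complex.I / (2 * n + 1) = 0 by ring,
    show (2 * ((k : ℂ) + (2 * n + 1)) - 2 * k) * θ * Complex.I / (2 * n + 1)
      = 2 * θ * Complex.I by field_simp; ring, Complex.exp_zero] at hsum
  rw [← Complex.ofReal_inj]
  push_cast
  rw [hsum, Complex.cos, show (4 : ℂ) ^ k = 2 ^ (2 * k) by rw [pow_mul]; norm_num]
  field_simp
  ring
end

section
/- For any real θ and natural numbers m, q, k with q ≤ k < m−q, the sum (1/m) ∑_{ℓ=0}^{m-1} (sin((θ+πℓ)/m))^{2k} · cos(2q(θ+πℓ)/m) equals ((−1)^q/4^k)·C(2k, k−q). -/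
open Real Finset

/-! Writing `sin x = (e^{-ix} - e^{ix}) i / 2` and `cos 2qx = (e^{2iqx} + e^{-2iqx}) / 2`, the product
`sin x ^ (2k) * cos 2qx` becomes a combination of `e^{2inx}` with `|n| ≤ k + q < m`. At the points
`x = (θ + πℓ)/m`, `e^{2inx}` is `e^{2inθ/m}` times the `ℓ`-th power of the `m`-th root of unity
`e^{2πin/m}`, which is `≠ 1` for `0 < |n| < m`; so summing over `ℓ` kills every frequency but `n = 0`,
which comes from the binomial terms `j = k ± q`. -/

namespace Complex

theorem sin_pow_two_mul_eq_sum (x : ℂ) (k : ℕ) :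
    sin x ^ (2 * k) = (-1) ^ k / 4 ^ k *
      ∑ j ∈ range (2 * k + 1), (-1) ^ j * (2 * k).choose j * exp (2 * ((k - j : ℤ) : ℂ) * x * I) := by
  have hbinom : (exp (-x * I) - exp (x * I)) ^ (2 * k) =
      ∑ j ∈ range (2 * k + 1), (-1) ^ j * (2 * k).choose j * exp (2 * ((k - j : ℤ) : ℂ) * x * I) := by
    rw [sub_eq_add_neg, add_pow]
    refine sum_congr rfl fun j hj => ?_
    have hj : j ≤ 2 * k := Nat.lt_succ_iff.mp (mem_range.mp hj)
    have hsign : (-1 : ℂ) ^ (2 * k - j) = (-1) ^ j := by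
      rw [neg_one_pow_eq_pow_mod_two, show (2 * k - j) % 2 = j % 2 by omega,
        ← neg_one_pow_eq_pow_mod_two]
    have hexp : exp (-x * I) ^ j * exp (x * I) ^ (2 * k - j) = exp (2 * ((k - j : ℤ) : ℂ) * x * I) := by
      rw [← exp_nat_mul, ← exp_nat_mul, ← exp_add]
      push_cast [hj]
      ring_nf
    rw [neg_pow, hsign]
    linear_combination (-1) ^ j * ((2 * k).choose j : ℂ) * hexp
  rw [sin, div_pow, mul_pow, hbinom, pow_mul, I_sq,
    show (2 : ℂ) ^ (2 * k) = 4 ^ k by norm_num [pow_mul]]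
  ring

theorem sin_pow_two_mul_mul_cos_eq_sum (x : ℂ) (k q : ℕ) :
    sin x ^ (2 * k) * cos (2 * q * x) = (-1) ^ k / 4 ^ k / 2 *
      ∑ j ∈ range (2 * k + 1), (-1) ^ j * (2 * k).choose j *
        (exp (2 * ((k + q - j : ℤ) : ℂ) * x * I) + exp (2 * ((k - q - j : ℤ) : ℂ) * x * I)) := by
  rw [sin_pow_two_mul_eq_sum, cos, mul_assoc, sum_mul, mul_sum, mul_sum]
  refine sum_congr rfl fun j _ => ?_
  have hplus : exp (2 * ((k - j : ℤ) : ℂ) * x * I) * exp (2 * q * x * I) =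
      exp (2 * ((k + q - j : ℤ) : ℂ) * x * I) := by
    rw [← exp_add]; push_cast; ring_nf
  have hminus : exp (2 * ((k - j : ℤ) : ℂ) * x * I) * exp (-(2 * q * x) * I) =
      exp (2 * ((k - q - j : ℤ) : ℂ) * x * I) := by
    rw [← exp_add]; push_cast; ring_nf
  linear_combination (-1) ^ k / 4 ^ k / 2 * ((-1) ^ j * ((2 * k).choose j : ℂ)) * (hplus + hminus)

theorem sum_range_exp_mul_eq_ite {m : ℕ} {s : ℤ} (hs : s.natAbs < m) (a : ℂ) :
    ∑ ℓ ∈ range m, exp (2 * s * ((a + π * ℓ) / m) * I) = if s = 0 then (m : ℂ) else 0 := by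
  split_ifs with h0
  · simp [h0]
  have hm : m ≠ 0 := by omega
  have hζ : IsPrimitiveRoot (exp (2 * π * I / m)) m := isPrimitiveRoot_exp m hm
  set ζ := exp (2 * π * I / m)
  have hterm (ℓ : ℕ) :
      exp (2 * s * ((a + π * ℓ) / m) * I) = exp (2 * s * a / m * I) * (ζ ^ s) ^ ℓ := by
    rw [← zpow_natCast, ← zpow_mul, ← exp_int_mul, ← exp_add]
    congr 1
    push_cast
    field_simp
  have hpow : (ζ ^ s) ^ m = 1 := by
    rw [← zpow_natCast, ← zpow_mul, mul_comm, zpow_mul, zpow_natCast, hζ.pow_eq_one, one_zpow]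
  have hne : ζ ^ s ≠ 1 := by
    rw [Ne, hζ.zpow_eq_one_iff_dvd]
    exact fun hdvd => h0 (Int.eq_zero_of_dvd_of_natAbs_lt_natAbs hdvd (by simpa))
  simp_rw [hterm, ← mul_sum, geom_sum_eq hne, hpow, sub_self, zero_div, mul_zero]

theorem sum_range_sin_pow_two_mul_mul_cos {m q k : ℕ} (hqk : q ≤ k) (hm : k + q < m) (a : ℂ) :
    ∑ ℓ ∈ range m, sin ((a + π * ℓ) / m) ^ (2 * k) * cos (2 * q * ((a + π * ℓ) / m)) =
      m * ((-1) ^ q / 4 ^ k * (2 * k).choose (k - q)) := by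
  have hfreq (j : ℕ) (hj : j ∈ range (2 * k + 1)) :
      ∑ ℓ ∈ range m, (exp (2 * ((k + q - j : ℤ) : ℂ) * ((a + π * ℓ) / m) * I) +
          exp (2 * ((k - q - j : ℤ) : ℂ) * ((a + π * ℓ) / m) * I)) =
        (if k + q = j then (m : ℂ) else 0) + (if k - q = j then (m : ℂ) else 0) := by
    have hj := mem_range.mp hj
    rw [sum_add_distrib, sum_range_exp_mul_eq_ite (by omega), sum_range_exp_mul_eq_ite (by omega)]
    congr 2 <;> (apply propext; omega)
  simp_rw [sin_pow_two_mul_mul_cos_eq_sum, ← mul_sum]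
  rw [sum_comm]
  simp_rw [← mul_sum]
  rw [sum_congr rfl fun j hj => congrArg _ (hfreq j hj)]
  simp only [mul_add, mul_ite, mul_zero, sum_add_distrib, sum_ite_eq, mem_range,
    show k + q < 2 * k + 1 by omega, show k - q < 2 * k + 1 by omega, if_true]
  obtain ⟨d, rfl⟩ := Nat.exists_eq_add_of_le hqk
  rw [Nat.choose_symm_of_eq_add (show 2 * (q + d) = q + d + q + d by ring), Nat.add_sub_cancel_left]
  have hsign : (-1 : ℂ) ^ (q + d + q) = (-1) ^ d := by
    rw [show q + d + q = d + 2 * q by ring, pow_add, pow_mul, neg_one_sq, one_pow, mul_one]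
  have hsq : (-1 : ℂ) ^ d * (-1) ^ d = 1 := by rw [← mul_pow]; norm_num
  rw [hsign, pow_add]
  linear_combination (-1) ^ q / 4 ^ (q + d) * ((2 * (q + d)).choose d : ℂ) * m * hsq

end Complex

theorem stmt_14 (θ : ℝ) (m q k : ℕ) (h1 : q ≤ k) (h2 : k < m - q) :
    (1 / (m : ℝ)) * ∑ ℓ ∈ Finset.range m,
        (Real.sin ((θ + Real.pi * ℓ) / m)) ^ (2 * k)
          * Real.cos (2 * q * (θ + Real.pi * ℓ) / m)
      = ((-1) ^ q / 4 ^ k) * (Nat.choose (2 * k) (k - q) : ℝ) := by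
  have hm : (m : ℂ) ≠ 0 := by exact_mod_cast (by omega : m ≠ 0)
  apply Complex.ofReal_injective
  push_cast
  simp_rw [mul_div_assoc]
  rw [Complex.sum_range_sin_pow_two_mul_mul_cos h1 (by omega), one_div, inv_mul_cancel_left₀ hm]
end
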